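/- arXiv:1604.06418 — 4 statements merged into one kernel-verified Lean document; each statement's English description precedes it below -/
import Mathlib

section
/- There exists a function γ : (0,1] → (0,∞) with γ(u) ↓ 0 as u ↓ 0 such that the following holds: for every submultiplicative positive random variable Y with 0 < E Y < ∞ and every event A with P(A) > 0, one has E[Y·1_A] / E Y ≤ γ(P(A)). -/
/-!
Markov's inequality gives `P(Y > 2 E Y) ≤ 1/2`, and submultiplicativity upgrades this to the
geometric tail `P(Y > 2 n E Y) ≤ 2⁻ⁿ`. Writing `Y ≤ c ⌈Y / c⌉` and `k² = ∑_{n < k} (2n + 1)`, the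
second moment is at most `c² ∑ₙ (2n + 1) P(Y > c n) ≤ 6 c² = 24 (E Y)²`, so Cauchy–Schwarz yields
`E[Y 1_A] ≤ √(P A) · √(E Y²) ≤ 5 √(P A) · E Y`, i.e. one can take `γ u = 5 √u`.
-/

open MeasureTheory
open scoped ENNReal

variable {Ω : Type*} [MeasurableSpace Ω] {μ : Measure Ω} {Y : Ω → ℝ}

theorem sum_range_two_mul_add_one (K : ℕ) : ∑ j ∈ Finset.range K, (2 * j + 1) = K ^ 2 := by
  induction K with
  | zero => rfl
  | succ K ih => rw [Finset.sum_range_succ, ih]; ring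

theorem ofReal_sq_le_mul_tsum_ite {c : ℝ} (hc : 0 < c) (y : ℝ) :
    ENNReal.ofReal y ^ 2 ≤
      ENNReal.ofReal (c ^ 2) * ∑' n : ℕ, if c * n < y then (2 * n + 1 : ℝ≥0∞) else 0 := by
  rcases le_or_gt y 0 with hy | hy
  · simp [ENNReal.ofReal_of_nonpos hy]
  set K := ⌈y / c⌉₊
  have hlt_iff : ∀ n : ℕ, c * n < y ↔ n ∈ Finset.range K := fun n => by
    rw [Finset.mem_range, Nat.lt_ceil, lt_div_iff₀ hc, mul_comm]
  have hsum : (∑' n : ℕ, if c * n < y then (2 * n + 1 : ℝ≥0∞) else 0) = (K : ℝ≥0∞) ^ 2 := by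
    simp_rw [hlt_iff]
    rw [tsum_eq_sum (s := Finset.range K) fun n hn => if_neg hn, Finset.sum_ite_mem,
      Finset.inter_self]
    exact_mod_cast sum_range_two_mul_add_one K
  have hyK : y ≤ c * K := by
    rw [← div_le_iff₀' hc]; exact Nat.le_ceil _
  rw [hsum, ← ENNReal.ofReal_pow hy.le, ← ENNReal.ofReal_natCast,
    ← ENNReal.ofReal_pow (by positivity), ← ENNReal.ofReal_mul (by positivity), ← mul_pow]
  exact ENNReal.ofReal_le_ofReal (pow_le_pow_left₀ hy.le hyK 2)

theorem lintegral_ofReal_sq_le_mul_tsum (hY : Measurable Y) {c : ℝ} (hc : 0 < c) :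
    ∫⁻ ω, ENNReal.ofReal (Y ω) ^ 2 ∂μ ≤
      ENNReal.ofReal (c ^ 2) * ∑' n : ℕ, (2 * n + 1 : ℝ≥0∞) * μ {ω | c * n < Y ω} := by
  have hite : ∀ n : ℕ, (fun ω => if c * n < Y ω then (2 * n + 1 : ℝ≥0∞) else 0) =
      {ω | c * n < Y ω}.indicator fun _ => (2 * n + 1 : ℝ≥0∞) := fun n => by
    ext ω; simp [Set.indicator_apply]
  calc ∫⁻ ω, ENNReal.ofReal (Y ω) ^ 2 ∂μ
      ≤ ∫⁻ ω, ENNReal.ofReal (c ^ 2) *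
          ∑' n : ℕ, if c * n < Y ω then (2 * n + 1 : ℝ≥0∞) else 0 ∂μ :=
        lintegral_mono fun ω => ofReal_sq_le_mul_tsum_ite hc (Y ω)
    _ = ENNReal.ofReal (c ^ 2) * ∑' n : ℕ, (2 * n + 1 : ℝ≥0∞) * μ {ω | c * n < Y ω} := by
        have hmeas : ∀ n : ℕ, MeasurableSet {ω | c * n < Y ω} := fun n =>
          measurableSet_lt measurable_const hY
        rw [lintegral_const_mul' _ _ ENNReal.ofReal_ne_top,
          lintegral_tsum fun n => (hite n ▸ (measurable_const.indicator (hmeas n))).aemeasurable]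
        simp_rw [hite, lintegral_indicator_const (hmeas _)]

theorem tsum_two_mul_add_one_mul_inv_two_pow :
    ∑' n : ℕ, (2 * n + 1 : ℝ≥0∞) * 2⁻¹ ^ n = 6 := by
  have hreal : HasSum (fun n : ℕ => (2 * n + 1 : ℝ) * (1 / 2) ^ n) 6 := by
    have h := ((hasSum_coe_mul_geometric_of_norm_lt_one (𝕜 := ℝ) (r := 1 / 2)
      (by norm_num)).mul_left 2).add (hasSum_geometric_of_lt_one (r := (1 / 2 : ℝ))
      (by norm_num) (by norm_num))
    norm_num at h
    simpa only [add_mul, mul_assoc, one_mul] using h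
  rw [← ENNReal.ofReal_ofNat 6, ← hreal.tsum_eq,
    ENNReal.ofReal_tsum_of_nonneg (fun n => by positivity) hreal.summable]
  congr 1; ext n
  rw [ENNReal.ofReal_mul (by positivity), ENNReal.ofReal_pow (by norm_num),
    ENNReal.ofReal_add (by positivity) zero_le_one]
  simp

theorem setLIntegral_le_rpow_measure_mul_rpow_lintegral_sq {f : Ω → ℝ≥0∞}
    (hf : AEMeasurable f μ) (A : Set Ω) :
    ∫⁻ ω in A, f ω ∂μ ≤ μ A ^ (1 / 2 : ℝ) * (∫⁻ ω, f ω ^ 2 ∂μ) ^ (1 / 2 : ℝ) := by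
  have hCS := ENNReal.lintegral_mul_le_Lp_mul_Lq (μ.restrict A) Real.HolderConjugate.two_two
    (f := fun _ => 1) aemeasurable_const hf.restrict
  simp only [Pi.mul_apply, one_mul, one_pow, lintegral_const, Measure.restrict_apply_univ,
    ENNReal.rpow_two] at hCS
  exact hCS.trans <|
    mul_le_mul_right (ENNReal.rpow_le_rpow (setLIntegral_le_lintegral _ _) (by norm_num)) _

theorem setIntegral_le_sqrt_mul_sqrt_of_lintegral_sq_le (hY : Measurable Y) (hY0 : 0 ≤ᵐ[μ] Y)
    {A : Set Ω} (hA : μ A ≠ ∞) {M : ℝ} (hM : 0 ≤ M)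
    (hsq : ∫⁻ ω, ENNReal.ofReal (Y ω) ^ 2 ∂μ ≤ ENNReal.ofReal M) :
    ∫ ω in A, Y ω ∂μ ≤ Real.sqrt (μ.real A) * Real.sqrt M := by
  have hbound : ∫⁻ ω in A, ENNReal.ofReal (Y ω) ∂μ ≤
      μ A ^ (1 / 2 : ℝ) * ENNReal.ofReal M ^ (1 / 2 : ℝ) :=
    (setLIntegral_le_rpow_measure_mul_rpow_lintegral_sq hY.ennreal_ofReal.aemeasurable A).trans
      (by gcongr)
  rw [integral_eq_lintegral_of_nonneg_ae (ae_restrict_of_ae hY0)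
    hY.aestronglyMeasurable.restrict]
  calc (∫⁻ ω in A, ENNReal.ofReal (Y ω) ∂μ).toReal
      ≤ (μ A ^ (1 / 2 : ℝ) * ENNReal.ofReal M ^ (1 / 2 : ℝ)).toReal :=
        ENNReal.toReal_mono (by finiteness) hbound
    _ = Real.sqrt (μ.real A) * Real.sqrt M := by
        rw [ENNReal.toReal_mul, ← ENNReal.toReal_rpow, ← ENNReal.toReal_rpow,
          ENNReal.toReal_ofReal hM, Real.sqrt_eq_rpow, Real.sqrt_eq_rpow, measureReal_def]

theorem measureReal_two_mul_integral_lt_le_half [IsFiniteMeasure μ] (hY : 0 ≤ᵐ[μ] Y)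
    (hint : Integrable Y μ) (hm : 0 < ∫ ω, Y ω ∂μ) :
    μ.real {ω | 2 * ∫ ω, Y ω ∂μ < Y ω} ≤ 1 / 2 := by
  have hmarkov := mul_meas_ge_le_integral_of_nonneg hY hint (2 * ∫ ω, Y ω ∂μ)
  have hmono : μ.real {ω | 2 * ∫ ω, Y ω ∂μ < Y ω} ≤ μ.real {ω | 2 * ∫ ω, Y ω ∂μ ≤ Y ω} :=
    measureReal_mono fun ω (h : _ < Y ω) => h.le
  nlinarith

def IsSubmultiplicative (μ : Measure Ω) (Y : Ω → ℝ) : Prop :=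
  ∀ y₁ y₂ : ℝ, 0 < y₁ → 0 < y₂ →
    μ.real {ω | y₁ + y₂ < Y ω} ≤ μ.real {ω | y₁ < Y ω} * μ.real {ω | y₂ < Y ω}

theorem IsSubmultiplicative.measureReal_mul_lt_le_pow [IsProbabilityMeasure μ]
    (hY : IsSubmultiplicative μ Y) {c q : ℝ} (hc : 0 < c) (hq : μ.real {ω | c < Y ω} ≤ q) :
    ∀ n : ℕ, μ.real {ω | c * n < Y ω} ≤ q ^ n
  | 0 => by simp
  | 1 => by simpa using hq
  | n + 2 => by
    have hsplit : {ω | c * ↑(n + 2) < Y ω} = {ω | c * ↑(n + 1) + c < Y ω} := by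
      ext ω; push_cast; ring_nf
    calc μ.real {ω | c * ↑(n + 2) < Y ω}
        ≤ μ.real {ω | c * ↑(n + 1) < Y ω} * μ.real {ω | c < Y ω} :=
          hsplit ▸ hY _ _ (by positivity) hc
      _ ≤ q ^ (n + 1) * q :=
          mul_le_mul (hY.measureReal_mul_lt_le_pow hc hq (n + 1)) hq measureReal_nonneg
            (pow_nonneg (measureReal_nonneg.trans hq) _)
      _ = q ^ (n + 2) := by ring

theorem IsSubmultiplicative.measure_lt_le_inv_two_pow [IsProbabilityMeasure μ]
    (hY : IsSubmultiplicative μ Y) (hY0 : 0 ≤ᵐ[μ] Y) (hint : Integrable Y μ)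
    (hm : 0 < ∫ ω, Y ω ∂μ) (n : ℕ) :
    μ {ω | 2 * (∫ ω, Y ω ∂μ) * n < Y ω} ≤ 2⁻¹ ^ n :=
  calc μ {ω | 2 * (∫ ω, Y ω ∂μ) * n < Y ω}
      = ENNReal.ofReal (μ.real {ω | 2 * (∫ ω, Y ω ∂μ) * n < Y ω}) :=
        (ENNReal.ofReal_toReal (measure_ne_top μ _)).symm
    _ ≤ ENNReal.ofReal ((1 / 2) ^ n) := ENNReal.ofReal_le_ofReal <|
        hY.measureReal_mul_lt_le_pow (mul_pos two_pos hm)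
          (measureReal_two_mul_integral_lt_le_half hY0 hint hm) n
    _ = 2⁻¹ ^ n := by
        rw [ENNReal.ofReal_pow (by norm_num), one_div, ENNReal.ofReal_inv_of_pos two_pos,
          ENNReal.ofReal_ofNat]

theorem IsSubmultiplicative.lintegral_sq_le [IsProbabilityMeasure μ]
    (hY : IsSubmultiplicative μ Y) (hYm : Measurable Y) (hY0 : 0 ≤ᵐ[μ] Y)
    (hint : Integrable Y μ) (hm : 0 < ∫ ω, Y ω ∂μ) :
    ∫⁻ ω, ENNReal.ofReal (Y ω) ^ 2 ∂μ ≤ ENNReal.ofReal ((5 * ∫ ω, Y ω ∂μ) ^ 2) :=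
  calc ∫⁻ ω, ENNReal.ofReal (Y ω) ^ 2 ∂μ
      ≤ ENNReal.ofReal ((2 * ∫ ω, Y ω ∂μ) ^ 2) * ∑' n : ℕ, (2 * n + 1 : ℝ≥0∞) * 2⁻¹ ^ n :=
        (lintegral_ofReal_sq_le_mul_tsum hYm (mul_pos two_pos hm)).trans <|
          mul_le_mul_right (ENNReal.tsum_le_tsum fun n =>
            mul_le_mul_right (hY.measure_lt_le_inv_two_pow hY0 hint hm n) _) _
    _ = ENNReal.ofReal (24 * (∫ ω, Y ω ∂μ) ^ 2) := by
        rw [tsum_two_mul_add_one_mul_inv_two_pow, ← ENNReal.ofReal_ofNat 6,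
          ← ENNReal.ofReal_mul (by positivity)]
        ring_nf
    _ ≤ ENNReal.ofReal ((5 * ∫ ω, Y ω ∂μ) ^ 2) := ENNReal.ofReal_le_ofReal (by nlinarith)

/-- Lemma 8: there is a universal function `γ : (0,1] → (0,∞)` with `γ(u) ↓ 0` as `u ↓ 0`
such that for every submultiplicative positive random variable `Y` with `0 < E Y < ∞` and
every event `A` with `P(A) > 0`, `E[Y 1_A] / E Y ≤ γ(P(A))`. -/
theorem submultiplicative_truncated_mean_bound :
    ∃ γ : ℝ → ℝ,
      (∀ u ∈ Set.Ioc (0:ℝ) 1, 0 < γ u) ∧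
      Filter.Tendsto γ (nhdsWithin 0 (Set.Ioi 0)) (nhds 0) ∧
      ∀ (Ω : Type) (_ : MeasurableSpace Ω) (μ : Measure Ω), IsProbabilityMeasure μ →
      ∀ Y : Ω → ℝ, Measurable Y → (∀ᵐ ω ∂μ, 0 < Y ω) →
        (∀ y₁ y₂ : ℝ, 0 < y₁ → 0 < y₂ →
          (μ {ω | y₁ + y₂ < Y ω}).toReal
            ≤ (μ {ω | y₁ < Y ω}).toReal * (μ {ω | y₂ < Y ω}).toReal) →
        Integrable Y μ → 0 < ∫ ω, Y ω ∂μ →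
      ∀ A : Set Ω, MeasurableSet A → 0 < (μ A).toReal →
        (∫ ω in A, Y ω ∂μ) / (∫ ω, Y ω ∂μ) ≤ γ ((μ A).toReal) := by
  refine ⟨fun u => 5 * Real.sqrt u, fun u hu => mul_pos (by norm_num) (Real.sqrt_pos.2 hu.1),
    ?_, ?_⟩
  · simpa using ((Real.continuous_sqrt.tendsto 0).const_mul 5).mono_left nhdsWithin_le_nhds
  intro Ω _ μ _ Y hYm hpos hsub hint hm A _ _
  have hY0 : 0 ≤ᵐ[μ] Y := hpos.mono fun _ h => h.le
  have hY : IsSubmultiplicative μ Y := hsub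
  rw [div_le_iff₀ hm]
  calc ∫ ω in A, Y ω ∂μ ≤ Real.sqrt (μ.real A) * Real.sqrt ((5 * ∫ ω, Y ω ∂μ) ^ 2) :=
        setIntegral_le_sqrt_mul_sqrt_of_lintegral_sq_le hYm hY0 (measure_ne_top μ A)
          (sq_nonneg _) (hY.lintegral_sq_le hYm hY0 hint hm)
    _ = 5 * Real.sqrt (μ.real A) * ∫ ω, Y ω ∂μ := by
        rw [Real.sqrt_sq (by positivity)]; ring
end

section
/- Let (ℱ_t)_{t≥0} be a filtration on a probability space, let T₁ and ζ be stopping times, let (η_t)_{t≥0} be a nonnegative progressively measurable process, and let c > 0 be a constant. Assume that the process M_t := exp(∫₀^t η_s ds)·1_{{T₁ > t}} is a martingale with respect to (ℱ_t), and that almost surely η_t ≥ c for all t with ζ > t. Then for every t₀ > 0, P( T₁ ≤ ζ ∧ t₀ ) ≥ (1 − e^{−c t₀}) · P( ζ > t₀ ). -/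
/-
Round `ζ` up to the grid `εℕ` and stop at `τ = min (⌈ζ/ε⌉ε) t₀`; this stopping time
has countable range, so optional sampling gives `P(T₁ > 0) = E M₀ = E M_τ`. On
`{ζ ≥ t₀, T₁ > t₀}` we have `τ = t₀` and the intensity is at least `c` on `[0, t₀)`, so
`M_τ ≥ e^{c t₀}`; on `{τ < t₀, τ < T₁}` we have `M_τ ≥ 1`. Covering `{T₁ > 0}` by the second
event and `{t₀ - ε < ζ} ∪ {T₁ < ζ + ε, ζ < t₀}` and letting `ε → 0` yields
`e^{c t₀} P(ζ ≥ t₀, T₁ > t₀) ≤ P(ζ ≥ t₀ ∨ T₁ ≤ ζ < t₀)`, which rearranges to the claim.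
-/

open MeasureTheory ProbabilityTheory Filter Topology Set

noncomputable def gridCeil (ε x : ℝ) : ℝ := ε * ⌈x / ε⌉₊

section gridCeil

variable {ε : ℝ} (hε : 0 < ε) (x : ℝ)
include hε

lemma le_gridCeil : x ≤ gridCeil ε x := by
  rw [gridCeil, ← div_le_iff₀' hε]
  exact Nat.le_ceil _

lemma gridCeil_nonneg : 0 ≤ gridCeil ε x := by
  unfold gridCeil; positivity

lemma gridCeil_lt_add (hpos : 0 < gridCeil ε x) : gridCeil ε x < x + ε := by
  have hx : 0 < x / ε := Nat.ceil_pos.mp (by exact_mod_cast pos_of_mul_pos_right hpos hε.le)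
  have := Nat.ceil_lt_add_one hx.le
  rw [gridCeil]
  calc ε * ⌈x / ε⌉₊ < ε * (x / ε + 1) := by gcongr
    _ = x + ε := by field_simp

lemma gridCeil_le_iff (t : ℝ) (ht : 0 ≤ t) : gridCeil ε x ≤ t ↔ x ≤ ε * ⌊t / ε⌋₊ := by
  rw [gridCeil, ← le_div_iff₀' hε, ← div_le_iff₀' hε, ← Nat.le_floor_iff (by positivity),
    Nat.ceil_le]

end gridCeil

namespace MeasureTheory.IsStoppingTime

variable {Ω : Type*} {m : MeasurableSpace Ω} {ℱ : Filtration ℝ m} {ζ : Ω → ℝ}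

lemma measurable_real (hζ : IsStoppingTime ℱ fun ω => (ζ ω : WithTop ℝ)) : Measurable ζ := by
  simpa using hζ.measurable'.untopA

lemma gridCeil (hζ : IsStoppingTime ℱ fun ω => (ζ ω : WithTop ℝ)) {ε : ℝ} (hε : 0 < ε) :
    IsStoppingTime ℱ fun ω => ((_root_.gridCeil ε (ζ ω) : ℝ) : WithTop ℝ) := by
  intro t
  simp only [WithTop.coe_le_coe]
  rcases lt_or_ge t 0 with ht | ht
  · convert @MeasurableSet.empty _ (ℱ t)
    exact eq_empty_of_forall_notMem fun ω h => (h.trans_lt ht).not_ge (gridCeil_nonneg hε _)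
  · simp only [gridCeil_le_iff hε _ t ht]
    refine ℱ.mono ?_ _ (by simpa only [WithTop.coe_le_coe] using hζ (ε * ⌊t / ε⌋₊))
    rw [← le_div_iff₀' hε]
    exact Nat.floor_le (by positivity)

end MeasureTheory.IsStoppingTime

namespace MeasureTheory.Martingale

variable {Ω E ι : Type*} {m : MeasurableSpace Ω} {μ : Measure Ω} [IsFiniteMeasure μ]
  [NormedAddCommGroup E] [NormedSpace ℝ E] [CompleteSpace E]
  [LinearOrder ι] [Nonempty ι] [TopologicalSpace ι] [OrderTopology ι] [FirstCountableTopology ι]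
  {ℱ : Filtration ι m} {f : ι → Ω → E} {τ : Ω → WithTop ι} {n : ι}

lemma integrable_stoppedValue_of_countable_range (h : Martingale f ℱ μ)
    (hτ : IsStoppingTime ℱ τ) (hτ_le : ∀ ω, τ ω ≤ n) (hτ_countable : (range τ).Countable) :
    Integrable (stoppedValue f τ) μ :=
  integrable_condExp.congr
    (h.stoppedValue_ae_eq_condExp_of_le_const_of_countable_range hτ hτ_le hτ_countable).symm

lemma integral_stoppedValue_of_countable_range (h : Martingale f ℱ μ)
    (hτ : IsStoppingTime ℱ τ) (hτ_le : ∀ ω, τ ω ≤ n) (hτ_countable : (range τ).Countable) :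
    ∫ ω, stoppedValue f τ ω ∂μ = ∫ ω, f n ω ∂μ := by
  rw [integral_congr_ae (h.stoppedValue_ae_eq_condExp_of_le_const_of_countable_range hτ hτ_le
    hτ_countable), integral_condExp (hτ.measurableSpace_le_of_le hτ_le)]

end MeasureTheory.Martingale

section minGridCeil

variable {Ω : Type*} {ζ : Ω → ℝ} {ε : ℝ}

lemma stoppedValue_min_gridCeil {β : Type*} {f : ℝ → Ω → β} (t₀ : ℝ) :
    stoppedValue f (fun ω => min ((gridCeil ε (ζ ω) : ℝ) : WithTop ℝ) t₀)
      = fun ω => f (min (gridCeil ε (ζ ω)) t₀) ω := by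
  ext ω
  simp only [stoppedValue, ← WithTop.coe_min, WithTop.untopD_coe]

lemma countable_range_min_gridCeil (t₀ : ℝ) :
    (range fun ω => min ((gridCeil ε (ζ ω) : ℝ) : WithTop ℝ) t₀).Countable :=
  (countable_range fun k : ℕ => min ((ε * k : ℝ) : WithTop ℝ) t₀).mono
    (by rintro _ ⟨ω, rfl⟩; exact ⟨_, rfl⟩)

variable {E : Type*} [NormedAddCommGroup E] [NormedSpace ℝ E] [CompleteSpace E]
  {m : MeasurableSpace Ω} {μ : Measure Ω} [IsFiniteMeasure μ] {ℱ : Filtration ℝ m}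
  {f : ℝ → Ω → E}

lemma MeasureTheory.Martingale.integrable_min_gridCeil (h : Martingale f ℱ μ)
    (hζ : IsStoppingTime ℱ fun ω => (ζ ω : WithTop ℝ)) (hε : 0 < ε) (t₀ : ℝ) :
    Integrable (fun ω => f (min (gridCeil ε (ζ ω)) t₀) ω) μ := by
  simpa only [stoppedValue_min_gridCeil] using h.integrable_stoppedValue_of_countable_range
    ((hζ.gridCeil hε).min_const t₀) (fun _ => min_le_right _ _) (countable_range_min_gridCeil t₀)

lemma MeasureTheory.Martingale.integral_min_gridCeil (h : Martingale f ℱ μ)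
    (hζ : IsStoppingTime ℱ fun ω => (ζ ω : WithTop ℝ)) (hε : 0 < ε) (t₀ : ℝ) :
    ∫ ω, f (min (gridCeil ε (ζ ω)) t₀) ω ∂μ = ∫ ω, f t₀ ω ∂μ := by
  simpa only [stoppedValue_min_gridCeil] using h.integral_stoppedValue_of_countable_range
    ((hζ.gridCeil hε).min_const t₀) (fun _ => min_le_right _ _) (countable_range_min_gridCeil t₀)

end minGridCeil

namespace MeasureTheory.IsStronglyProgressive

variable {Ω E : Type*} {m : MeasurableSpace Ω} [NormedAddCommGroup E] {ℱ : Filtration ℝ m}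
  {η : ℝ → Ω → E}

lemma stronglyMeasurable_uncurry_min (h : IsStronglyProgressive ℱ η) (t : ℝ) :
    StronglyMeasurable[MeasurableSpace.prod inferInstance (ℱ t)]
      fun p : ℝ × Ω => η (min p.1 t) p.2 := by
  have hφ : Measurable[MeasurableSpace.prod inferInstance (ℱ t),
      Subtype.instMeasurableSpace.prod (ℱ t)]
      fun p : ℝ × Ω => ((⟨min p.1 t, mem_Iic.mpr (min_le_right _ _)⟩ : Iic t), p.2) :=
    ((measurable_fst.min measurable_const).subtype_mk).prodMk measurable_snd
  exact (h t).comp_measurable hφ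

lemma measurableSet_intervalIntegrable (h : IsStronglyProgressive ℱ η) {a t : ℝ} (hat : a ≤ t) :
    MeasurableSet[ℱ t] {ω | IntervalIntegrable (fun s => η s ω) volume a t} := by
  have hg := h.stronglyMeasurable_uncurry_min t
  have heq : ∀ ω, ∀ s ∈ Ioc a t, η (min s t) ω = η s ω := fun ω s hs => by
    rw [min_eq_left hs.2]
  have hset : {ω | IntervalIntegrable (fun s => η s ω) volume a t} =
      {ω | ∫⁻ s in Ioc a t, ‖η (min s t) ω‖ₑ < ⊤} := by
    ext ω
    have hmeas : AEStronglyMeasurable (fun s => η s ω) (volume.restrict (Ioc a t)) :=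
      (hg.comp_measurable (measurable_id.prodMk measurable_const)).aestronglyMeasurable.congr
        ((ae_restrict_iff' measurableSet_Ioc).mpr (Eventually.of_forall (heq ω)))
    rw [mem_ofPred_eq, mem_ofPred_eq, intervalIntegrable_iff_integrableOn_Ioc_of_le hat,
      IntegrableOn, Integrable, hasFiniteIntegral_iff_enorm,
      setLIntegral_congr_fun measurableSet_Ioc fun s hs => by rw [← heq ω s hs]]
    exact and_iff_right hmeas
  rw [hset]
  exact measurableSet_lt (@Measurable.lintegral_prod_left' ℝ Ω _ (ℱ t) (volume.restrict (Ioc a t))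
    _ _ hg.enorm) measurable_const

end MeasureTheory.IsStronglyProgressive

lemma biInter_pos_setOf_sub_lt_or_lt_add {Ω : Type*} (ζ T : Ω → ℝ) (t₀ : ℝ) :
    ⋂ ε > (0 : ℝ), {ω | t₀ - ε < ζ ω ∨ (T ω < ζ ω + ε ∧ ζ ω < t₀)}
      = {ω | t₀ ≤ ζ ω ∨ (T ω ≤ ζ ω ∧ ζ ω < t₀)} := by
  ext ω
  simp only [mem_iInter, mem_ofPred_eq]
  constructor
  · intro h
    refine (le_or_gt t₀ (ζ ω)).imp id fun hζ => ⟨le_of_forall_pos_lt_add fun ε hε => ?_, hζ⟩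
    have hδ : 0 < min ε (t₀ - ζ ω) := lt_min hε (by linarith)
    rcases h _ hδ with h' | h'
    · linarith [min_le_right ε (t₀ - ζ ω)]
    · linarith [min_le_left ε (t₀ - ζ ω)]
  · rintro (h | h) ε hε
    · exact Or.inl (by linarith)
    · exact Or.inr ⟨by linarith, h.2⟩

lemma le_measureReal_biInter_gt {α ι : Type*} {m : MeasurableSpace α} {μ : Measure α}
    [IsFiniteMeasure μ] [LinearOrder ι] [TopologicalSpace ι] [OrderTopology ι]
    [FirstCountableTopology ι] {s : ι → Set α} {a : ι} [(𝓝[>] a).NeBot] {x : ℝ}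
    (hs : ∀ r > a, NullMeasurableSet (s r) μ) (hm : ∀ i j, a < i → i ≤ j → s i ⊆ s j)
    (hx : ∀ r > a, x ≤ μ.real (s r)) :
    x ≤ μ.real (⋂ r > a, s r) := by
  obtain ⟨r, hr⟩ := (𝓝[>] a).nonempty_of_mem self_mem_nhdsWithin
  refine ge_of_tendsto ((ENNReal.tendsto_toReal (measure_ne_top μ _)).comp
    (tendsto_measure_biInter_gt hs hm ⟨r, hr, measure_ne_top μ _⟩)) ?_
  filter_upwards [self_mem_nhdsWithin] with r hr using hx r hr

section compensatedSurvival

variable {Ω : Type*}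

noncomputable def compensatedSurvival (η : ℝ → Ω → ℝ) (T : Ω → ℝ) (t : ℝ) (ω : Ω) : ℝ :=
  Real.exp (∫ s in (0:ℝ)..t, η s ω) * Set.indicator {ω' | t < T ω'} (fun _ => (1:ℝ)) ω

variable {η : ℝ → Ω → ℝ} {T : Ω → ℝ} {t : ℝ} {ω : Ω}

lemma compensatedSurvival_nonneg : 0 ≤ compensatedSurvival η T t ω :=
  mul_nonneg (Real.exp_pos _).le (indicator_nonneg (fun _ _ => zero_le_one) ω)

lemma compensatedSurvival_zero : compensatedSurvival η T 0 = {ω | 0 < T ω}.indicator 1 := by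
  ext ω
  simp [compensatedSurvival, Pi.one_def]

lemma compensatedSurvival_of_not_intervalIntegrable
    (h : ¬ IntervalIntegrable (fun s => η s ω) volume 0 t) :
    compensatedSurvival η T t ω = {ω | t < T ω}.indicator 1 ω := by
  simp [compensatedSurvival, intervalIntegral.integral_undef h, Pi.one_def]

lemma compensatedSurvival_of_lt (hT : t < T ω) :
    compensatedSurvival η T t ω = Real.exp (∫ s in (0:ℝ)..t, η s ω) := by
  simp [compensatedSurvival, hT]

lemma one_le_compensatedSurvival (hη : ∀ s, 0 ≤ η s ω) (ht : 0 ≤ t) (hT : t < T ω) :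
    1 ≤ compensatedSurvival η T t ω := by
  rw [compensatedSurvival_of_lt hT]
  exact Real.one_le_exp (intervalIntegral.integral_nonneg ht fun s _ => hη s)

lemma exp_mul_le_compensatedSurvival {c : ℝ} (hint : IntervalIntegrable (fun s => η s ω) volume 0 t)
    (hc : ∀ s ∈ Ico 0 t, c ≤ η s ω) (ht : 0 ≤ t) (hT : t < T ω) :
    Real.exp (c * t) ≤ compensatedSurvival η T t ω := by
  rw [compensatedSurvival_of_lt hT, Real.exp_le_exp]
  have hae : (fun _ => c) ≤ᵐ[volume.restrict (Icc 0 t)] fun s => η s ω := by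
    rw [Measure.restrict_congr_set Ico_ae_eq_Icc.symm]
    exact (ae_restrict_iff' measurableSet_Ico).mpr (Eventually.of_forall hc)
  simpa [mul_comm] using
    intervalIntegral.integral_mono_ae_restrict ht intervalIntegrable_const hint hae

variable {m : MeasurableSpace Ω} {μ : Measure Ω} {ℱ : Filtration ℝ m}

lemma setIntegral_compensatedSurvival_of_not_intervalIntegrable (hT : Measurable T) {P : Set Ω}
    (hP : MeasurableSet P) (hPη : ∀ ω ∈ P, ¬ IntervalIntegrable (fun s => η s ω) volume 0 t) :
    ∫ ω in P, compensatedSurvival η T t ω ∂μ = μ.real ({ω | t < T ω} ∩ P) := by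
  rw [setIntegral_congr_fun hP fun ω hω => compensatedSurvival_of_not_intervalIntegrable (hPη ω hω),
    integral_indicator_one (measurableSet_lt measurable_const hT),
    measureReal_restrict_apply (measurableSet_lt measurable_const hT)]

/- A non-integrable interval integral is `0`, so on the set `P` where `η` is not integrable on
`[0, t]` the process is `M_u = 1_{u < T}` for all `u ≥ t`; the martingale property then makes
`μ({u < T} ∩ P)` constant in `u ≥ t`, hence `0`. -/
lemma ae_intervalIntegrable_of_martingale_compensatedSurvival [IsFiniteMeasure μ]
    (hmart : Martingale (compensatedSurvival η T) ℱ μ) (hT : Measurable T)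
    (hη : IsStronglyProgressive ℱ η) (ht : 0 ≤ t) :
    ∀ᵐ ω ∂μ, t < T ω → IntervalIntegrable (fun s => η s ω) volume 0 t := by
  set P := {ω | IntervalIntegrable (fun s => η s ω) volume 0 t}ᶜ
  have hP : MeasurableSet[ℱ t] P := (hη.measurableSet_intervalIntegrable ht).compl
  have hPm : MeasurableSet P := ℱ.le t _ hP
  have hPη : ∀ u ≥ t, ∀ ω ∈ P, ¬ IntervalIntegrable (fun s => η s ω) volume 0 u :=
    fun u hu ω hω h => hω (h.mono_set (uIcc_subset_uIcc left_mem_uIcc (mem_uIcc_of_le ht hu)))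
  have hconst : ∀ u ≥ t, μ ({ω | u < T ω} ∩ P) = μ ({ω | t < T ω} ∩ P) := fun u hu => by
    rw [← measureReal_eq_measureReal_iff,
      ← setIntegral_compensatedSurvival_of_not_intervalIntegrable hT hPm (hPη u hu),
      ← setIntegral_compensatedSurvival_of_not_intervalIntegrable hT hPm (hPη t le_rfl),
      hmart.setIntegral_eq hu hP]
  have hlim := tendsto_measure_iInter_atTop (μ := μ) (s := fun u => {ω | u < T ω} ∩ P)
    (fun u => ((measurableSet_lt measurable_const hT).inter hPm).nullMeasurableSet)
    (fun u v huv ω hω => ⟨huv.trans_lt hω.1, hω.2⟩) ⟨t, measure_ne_top _ _⟩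
  have hempty : ⋂ u, {ω | u < T ω} ∩ P = ∅ :=
    eq_empty_of_forall_notMem fun ω hω => lt_irrefl (T ω) (mem_iInter.mp hω (T ω)).1
  rw [hempty, measure_empty] at hlim
  rw [ae_iff]
  convert tendsto_nhds_unique
    (tendsto_const_nhds.congr' ((eventually_ge_atTop t).mono fun u hu => (hconst u hu).symm)) hlim
  ext ω
  simp [P]

lemma indicator_add_indicator_le_compensatedSurvival_min {ζ : Ω → ℝ} (hη : ∀ s, 0 ≤ η s ω)
    {c t₀ ε : ℝ} (ht₀ : 0 ≤ t₀) (hε : 0 < ε)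
    (hint : t₀ < T ω → IntervalIntegrable (fun s => η s ω) volume 0 t₀)
    (hbound : ∀ t : ℝ, 0 ≤ t → t < ζ ω → c ≤ η t ω) :
    {ω | t₀ ≤ ζ ω ∧ t₀ < T ω}.indicator (fun _ => Real.exp (c * t₀)) ω
        + {ω | gridCeil ε (ζ ω) < t₀ ∧ gridCeil ε (ζ ω) < T ω}.indicator 1 ω
      ≤ compensatedSurvival η T (min (gridCeil ε (ζ ω)) t₀) ω := by
  by_cases hX : ω ∈ {ω | t₀ ≤ ζ ω ∧ t₀ < T ω}
  · have hσ : t₀ ≤ gridCeil ε (ζ ω) := hX.1.trans (le_gridCeil hε _)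
    rw [indicator_of_mem hX, indicator_of_notMem (fun hY => hY.1.not_ge hσ), add_zero,
      min_eq_right hσ]
    exact exp_mul_le_compensatedSurvival (hint hX.2)
      (fun s hs => hbound s hs.1 (hs.2.trans_le hX.1)) ht₀ hX.2
  by_cases hY : ω ∈ {ω | gridCeil ε (ζ ω) < t₀ ∧ gridCeil ε (ζ ω) < T ω}
  · rw [indicator_of_notMem hX, indicator_of_mem hY, zero_add, min_eq_left hY.1.le]
    exact one_le_compensatedSurvival hη (gridCeil_nonneg hε _) hY.2
  · rw [indicator_of_notMem hX, indicator_of_notMem hY, add_zero]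
    exact compensatedSurvival_nonneg

lemma exp_mul_measureReal_add_measureReal_le [IsFiniteMeasure μ]
    (hmart : Martingale (compensatedSurvival η T) ℱ μ) (hT : Measurable T) {ζ : Ω → ℝ}
    (hζ : IsStoppingTime ℱ fun ω => (ζ ω : WithTop ℝ)) (hη : ∀ s ω, 0 ≤ η s ω) {c t₀ ε : ℝ}
    (ht₀ : 0 ≤ t₀) (hε : 0 < ε)
    (hint : ∀ᵐ ω ∂μ, t₀ < T ω → IntervalIntegrable (fun s => η s ω) volume 0 t₀)
    (hbound : ∀ᵐ ω ∂μ, ∀ t : ℝ, 0 ≤ t → t < ζ ω → c ≤ η t ω) :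
    Real.exp (c * t₀) * μ.real {ω | t₀ ≤ ζ ω ∧ t₀ < T ω}
        + μ.real {ω | gridCeil ε (ζ ω) < t₀ ∧ gridCeil ε (ζ ω) < T ω}
      ≤ μ.real {ω | 0 < T ω} := by
  set X := {ω | t₀ ≤ ζ ω ∧ t₀ < T ω}
  set Y := {ω | gridCeil ε (ζ ω) < t₀ ∧ gridCeil ε (ζ ω) < T ω}
  have hζm := hζ.measurable_real
  have hσm := (hζ.gridCeil hε).measurable_real
  have hX : MeasurableSet X :=
    (measurableSet_le measurable_const hζm).inter (measurableSet_lt measurable_const hT)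
  have hY : MeasurableSet Y :=
    (measurableSet_lt hσm measurable_const).inter (measurableSet_lt hσm hT)
  calc Real.exp (c * t₀) * μ.real X + μ.real Y
      = ∫ ω, X.indicator (fun _ => Real.exp (c * t₀)) ω + Y.indicator 1 ω ∂μ := by
        rw [integral_add ((integrable_const _).indicator hX) ((integrable_const _).indicator hY),
          integral_indicator_const _ hX, integral_indicator_one hY, smul_eq_mul, mul_comm]
    _ ≤ ∫ ω, compensatedSurvival η T (min (gridCeil ε (ζ ω)) t₀) ω ∂μ :=
        integral_mono_ae (((integrable_const _).indicator hX).add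
          ((integrable_const _).indicator hY))
          (hmart.integrable_min_gridCeil hζ hε t₀) <| by
            filter_upwards [hint, hbound] with ω hintω hboundω
            exact indicator_add_indicator_le_compensatedSurvival_min (hη · ω) ht₀ hε hintω hboundω
    _ = ∫ ω, compensatedSurvival η T 0 ω ∂μ := by
        rw [hmart.integral_min_gridCeil hζ hε t₀, ← setIntegral_univ,
          ← hmart.setIntegral_eq ht₀ MeasurableSet.univ, setIntegral_univ]
    _ = μ.real {ω | 0 < T ω} := by
        rw [compensatedSurvival_zero, integral_indicator_one (measurableSet_lt measurable_const hT)]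

lemma exp_mul_measureReal_le_measureReal_of_gridCeil [IsFiniteMeasure μ]
    (hmart : Martingale (compensatedSurvival η T) ℱ μ) (hT : Measurable T) {ζ : Ω → ℝ}
    (hζ : IsStoppingTime ℱ fun ω => (ζ ω : WithTop ℝ)) (hη : ∀ s ω, 0 ≤ η s ω) {c t₀ ε : ℝ}
    (ht₀ : 0 < t₀) (hε : 0 < ε)
    (hint : ∀ᵐ ω ∂μ, t₀ < T ω → IntervalIntegrable (fun s => η s ω) volume 0 t₀)
    (hbound : ∀ᵐ ω ∂μ, ∀ t : ℝ, 0 ≤ t → t < ζ ω → c ≤ η t ω) :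
    Real.exp (c * t₀) * μ.real {ω | t₀ ≤ ζ ω ∧ t₀ < T ω}
      ≤ μ.real {ω | t₀ - ε < ζ ω ∨ (T ω < ζ ω + ε ∧ ζ ω < t₀)} := by
  have hcover : {ω | 0 < T ω} ⊆ {ω | gridCeil ε (ζ ω) < t₀ ∧ gridCeil ε (ζ ω) < T ω}
      ∪ {ω | t₀ - ε < ζ ω ∨ (T ω < ζ ω + ε ∧ ζ ω < t₀)} := by
    intro ω (hT0 : 0 < T ω)
    have hζσ := le_gridCeil hε (ζ ω)
    by_cases hY : gridCeil ε (ζ ω) < t₀ ∧ gridCeil ε (ζ ω) < T ω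
    · exact Or.inl hY
    right
    rcases le_or_gt t₀ (gridCeil ε (ζ ω)) with hσ | hσ
    · have := gridCeil_lt_add hε _ (ht₀.trans_le hσ)
      exact Or.inl (by linarith)
    · have hTσ : T ω ≤ gridCeil ε (ζ ω) := not_lt.mp fun h => hY ⟨hσ, h⟩
      have := gridCeil_lt_add hε _ (hT0.trans_le hTσ)
      exact Or.inr ⟨by linarith, by linarith⟩
  have := exp_mul_measureReal_add_measureReal_le hmart hT hζ hη ht₀.le hε hint hbound
  have := (measureReal_mono (μ := μ) hcover).trans (measureReal_union_le _ _)
  linarith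

lemma exp_mul_measureReal_le_measureReal [IsFiniteMeasure μ]
    (hmart : Martingale (compensatedSurvival η T) ℱ μ) (hT : Measurable T) {ζ : Ω → ℝ}
    (hζ : IsStoppingTime ℱ fun ω => (ζ ω : WithTop ℝ)) (hη : ∀ s ω, 0 ≤ η s ω) {c t₀ : ℝ}
    (ht₀ : 0 < t₀) (hint : ∀ᵐ ω ∂μ, t₀ < T ω → IntervalIntegrable (fun s => η s ω) volume 0 t₀)
    (hbound : ∀ᵐ ω ∂μ, ∀ t : ℝ, 0 ≤ t → t < ζ ω → c ≤ η t ω) :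
    Real.exp (c * t₀) * μ.real {ω | t₀ ≤ ζ ω ∧ t₀ < T ω}
      ≤ μ.real {ω | t₀ ≤ ζ ω ∨ (T ω ≤ ζ ω ∧ ζ ω < t₀)} := by
  have hζm := hζ.measurable_real
  rw [← biInter_pos_setOf_sub_lt_or_lt_add]
  refine le_measureReal_biInter_gt (fun ε _ => ?_) (fun ε δ _ hεδ ω hω => ?_)
    fun ε hε => exp_mul_measureReal_le_measureReal_of_gridCeil hmart hT hζ hη ht₀ hε hint hbound
  · exact (measurableSet_lt measurable_const hζm |>.union
      ((measurableSet_lt hT (hζm.add_const ε)).inter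
        (measurableSet_lt hζm measurable_const))).nullMeasurableSet
  · exact hω.imp (fun h => by linarith) fun h => ⟨by linarith [h.1], h.2⟩

end compensatedSurvival

/-- Lemma 9: if a stopping time `T₁` has random intensity `η_t` (formalized by the
martingale property of `exp(∫₀ᵗ η_s ds)·1_{T₁ > t}`), and `η_t ≥ c` whenever `ζ > t`
for another stopping time `ζ`, then `P(T₁ ≤ ζ ∧ t₀) ≥ (1 − e^{−c t₀}) P(ζ > t₀)`. -/
theorem stopping_time_intensity_bound
    {Ω : Type} {m0 : MeasurableSpace Ω} (μ : Measure Ω) [IsProbabilityMeasure μ]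
    (ℱ : Filtration ℝ m0)
    (T₁ ζ : Ω → ℝ) (hT₁ : IsStoppingTime ℱ (fun ω => (T₁ ω : WithTop ℝ)))
    (hζ : IsStoppingTime ℱ (fun ω => (ζ ω : WithTop ℝ)))
    (η : ℝ → Ω → ℝ) (hη_prog : ProgMeasurable ℱ η) (hη_nonneg : ∀ t ω, 0 ≤ η t ω)
    (c : ℝ) (hc : 0 < c)
    (hmart : Martingale
      (fun t ω => Real.exp (∫ s in (0:ℝ)..t, η s ω)
        * Set.indicator {ω' | t < T₁ ω'} (fun _ => (1:ℝ)) ω) ℱ μ)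
    (hbound : ∀ᵐ ω ∂μ, ∀ t : ℝ, 0 ≤ t → t < ζ ω → c ≤ η t ω)
    (t₀ : ℝ) (ht₀ : 0 < t₀) :
    (1 - Real.exp (-c * t₀)) * (μ {ω | t₀ < ζ ω}).toReal
      ≤ (μ {ω | T₁ ω ≤ min (ζ ω) t₀}).toReal := by
  change Martingale (compensatedSurvival η T₁) ℱ μ at hmart
  have hT₁m := hT₁.measurable_real
  have hkey := exp_mul_measureReal_le_measureReal hmart hT₁m hζ hη_nonneg ht₀
    (ae_intervalIntegrable_of_martingale_compensatedSurvival hmart hT₁m hη_prog ht₀.le) hbound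
  have hsplit : μ.real {ω | t₀ ≤ ζ ω ∨ (T₁ ω ≤ ζ ω ∧ ζ ω < t₀)}
      ≤ μ.real {ω | t₀ ≤ ζ ω ∧ t₀ < T₁ ω} + μ.real {ω | T₁ ω ≤ min (ζ ω) t₀} := by
    refine (measureReal_mono fun ω hω => ?_).trans (measureReal_union_le _ _)
    rcases hω with h | h
    · rcases le_or_gt (T₁ ω) t₀ with hT | hT
      exacts [Or.inr (le_min (hT.trans h) hT), Or.inl ⟨h, hT⟩]
    · exact Or.inr (le_min h.1 (h.1.trans h.2.le))
  have hζZ : μ.real {ω | t₀ < ζ ω} ≤ μ.real {ω | t₀ ≤ ζ ω ∨ (T₁ ω ≤ ζ ω ∧ ζ ω < t₀)} :=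
    measureReal_mono fun ω hω => Or.inl (le_of_lt hω)
  have hX : μ.real {ω | t₀ ≤ ζ ω ∧ t₀ < T₁ ω}
      ≤ Real.exp (-c * t₀) * μ.real {ω | t₀ ≤ ζ ω ∨ (T₁ ω ≤ ζ ω ∧ ζ ω < t₀)} := by
    calc _ = Real.exp (-c * t₀) * (Real.exp (c * t₀) * μ.real {ω | t₀ ≤ ζ ω ∧ t₀ < T₁ ω}) := by
          rw [← mul_assoc, ← Real.exp_add, neg_mul, neg_add_cancel, Real.exp_zero, one_mul]
      _ ≤ _ := by gcongr
  have hq : 0 ≤ 1 - Real.exp (-c * t₀) :=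
    sub_nonneg.mpr (Real.exp_le_one_iff.mpr (by nlinarith))
  calc (1 - Real.exp (-c * t₀)) * μ.real {ω | t₀ < ζ ω}
      ≤ (1 - Real.exp (-c * t₀)) * μ.real {ω | t₀ ≤ ζ ω ∨ (T₁ ω ≤ ζ ω ∧ ζ ω < t₀)} := by gcongr
    _ ≤ μ.real {ω | T₁ ω ≤ min (ζ ω) t₀} := by linarith
end

section
/- Let A and B be nonnegative random variables on a common probability space with A integrable, and let a₀ > 0 satisfy E[ A·1_{{A > a₀}} ] ≤ E A − E[ min(A,B) ]. Then P( B < A ) ≥ P( A > a₀ ). -/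
/-!
The pointwise inequality
`a₀ (1_{a₀ < A} - 1_{B < A}) ≤ A 1_{a₀ < A} - (A - min A B)`
holds on each of the four cells cut out by the two events.
Integrating it, the constraint makes the right-hand side nonpositive, so
`a₀ (P(a₀ < A) - P(B < A)) ≤ 0`, and `a₀ > 0` concludes.
-/

open MeasureTheory ProbabilityTheory

theorem MeasureTheory.Integrable.min_of_nonneg {α : Type*} [MeasurableSpace α] {μ : Measure α}
    {f g : α → ℝ} (hf : Integrable f μ) (hg : AEStronglyMeasurable g μ) (hg₀ : ∀ x, 0 ≤ g x) :
    Integrable (fun x ↦ min (f x) (g x)) μ :=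
  hf.mono (hf.aestronglyMeasurable.inf hg) <| ae_of_all _ fun x ↦ by
    simp only [Real.norm_eq_abs, abs_le]
    constructor <;> cases min_choice (f x) (g x) <;> grind [le_abs_self, neg_abs_le]

section

variable {Ω : Type*} (A B : Ω → ℝ) (a₀ : ℝ)

theorem mul_indicator_sub_indicator_le (hB : ∀ ω, 0 ≤ B ω) (ω : Ω) :
    a₀ * ({ω | a₀ < A ω}.indicator 1 ω - {ω | B ω < A ω}.indicator 1 ω)
      ≤ {ω | a₀ < A ω}.indicator A ω - (A ω - min (A ω) (B ω)) := by
  have := hB ω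
  simp only [Set.indicator_apply, Set.mem_ofPred_eq, Pi.one_apply]
  split_ifs <;> grind

theorem mul_measureReal_sub_le_setIntegral_sub [MeasurableSpace Ω] (μ : Measure Ω)
    [IsFiniteMeasure μ] (hAmeas : Measurable A) (hBmeas : Measurable B) (hB : ∀ ω, 0 ≤ B ω)
    (hAint : Integrable A μ) :
    a₀ * (μ.real {ω | a₀ < A ω} - μ.real {ω | B ω < A ω})
      ≤ (∫ ω in {ω | a₀ < A ω}, A ω ∂μ) - ((∫ ω, A ω ∂μ) - ∫ ω, min (A ω) (B ω) ∂μ) := by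
  have hS : MeasurableSet {ω | a₀ < A ω} := measurableSet_lt measurable_const hAmeas
  have hT : MeasurableSet {ω | B ω < A ω} := measurableSet_lt hBmeas hAmeas
  have hmin := hAint.min_of_nonneg hBmeas.aestronglyMeasurable hB
  have hdiff : Integrable (fun ω ↦ A ω - min (A ω) (B ω)) μ := hAint.sub hmin
  have hone : Integrable (1 : Ω → ℝ) μ := integrable_const 1
  have h := integral_mono ((hone.indicator hS).sub (hone.indicator hT) |>.const_mul a₀)
    ((hAint.indicator hS).sub hdiff) (mul_indicator_sub_indicator_le A B a₀ hB)
  simp only [Pi.sub_apply] at h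
  rwa [integral_const_mul, integral_sub (hone.indicator hS) (hone.indicator hT),
    integral_indicator_one hS, integral_indicator_one hT,
    integral_sub (hAint.indicator hS) hdiff, integral_indicator hS,
    integral_sub hAint hmin] at h

end

theorem prob_lt_ge_of_truncated_mean_general
    {Ω : Type} [MeasurableSpace Ω] (μ : Measure Ω) [IsProbabilityMeasure μ]
    (A B : Ω → ℝ) (hAmeas : Measurable A) (hBmeas : Measurable B)
    (hB : ∀ ω, 0 ≤ B ω)
    (hAint : Integrable A μ)
    (a₀ : ℝ) (ha₀ : 0 < a₀)
    (hconstraint : (∫ ω in {ω | a₀ < A ω}, A ω ∂μ)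
      ≤ (∫ ω, A ω ∂μ) - ∫ ω, min (A ω) (B ω) ∂μ) :
    (μ {ω | a₀ < A ω}).toReal ≤ (μ {ω | B ω < A ω}).toReal := by
  have key := mul_measureReal_sub_le_setIntegral_sub A B a₀ μ hAmeas hBmeas hB hAint
  rw [← measureReal_def, ← measureReal_def]
  exact sub_nonpos.1 (nonpos_of_mul_nonpos_right (key.trans (sub_nonpos.2 hconstraint)) ha₀)

/-- The extremal fact used in Lemma 8's proof: if `A, B ≥ 0`, `A` is integrable and
`E[A·1_{A > a₀}] ≤ E A − E[min(A,B)]`, then `P(B < A) ≥ P(A > a₀)`. -/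
theorem prob_lt_ge_of_truncated_mean
    {Ω : Type} [MeasurableSpace Ω] (μ : Measure Ω) [IsProbabilityMeasure μ]
    (A B : Ω → ℝ) (hAmeas : Measurable A) (hBmeas : Measurable B)
    (hA : ∀ ω, 0 ≤ A ω) (hB : ∀ ω, 0 ≤ B ω)
    (hAint : Integrable A μ)
    (a₀ : ℝ) (ha₀ : 0 < a₀)
    (hconstraint : (∫ ω in {ω | a₀ < A ω}, A ω ∂μ)
      ≤ (∫ ω, A ω ∂μ) - ∫ ω, min (A ω) (B ω) ∂μ) :
    (μ {ω | a₀ < A ω}).toReal ≤ (μ {ω | B ω < A ω}).toReal :=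
  prob_lt_ge_of_truncated_mean_general μ A B hAmeas hBmeas hB hAint a₀ ha₀ hconstraint
end

section
/- For k ≥ 1 define F_k(s) := E[ ( max(0, s − Σ_{i=1}^k U_i) )² ], where U₁,…,U_k are i.i.d. Uniform(0,1). Let 0 < a < b, let λ₁,…,λ_k > 0 be arbitrary, and let V₁,…,V_k be independent random variables where V_i is distributed as an Exponential random variable of rate λ_i conditioned to lie in [a,b]. Then for arbitrary v₁,…,v_k ∈ [a,b], E[ ( max(0, Σ_{i=1}^k v_i − Σ_{i=1}^k V_i) )² ] ≥ (b−a)² · F_k( Σ_{i=1}^k (v_i − a)/(b−a) ). -/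
/-!
Each `V_i` has the law of `ψ_i(U_i)` for `U_i` uniform on `[0,1]`, where
`ψ_i(u) = -log((1-u) e^{-λ_i a} + u e^{-λ_i b}) / λ_i` is the quantile function of the conditioned
exponential. Convexity of `exp` gives `ψ_i(u) ≤ a + (b-a) u`, so the `V_i` are stochastically
dominated by uniforms on `[a,b]`. As `x ↦ max(0, S - x)²` is nonincreasing, replacing `Σ V_i` by
`Σ (a + (b-a) U_i)` can only decrease the expectation, and the latter expectation is
`(b-a)² F_k(Σ (v_i - a)/(b-a))` after scaling by `b - a`.
-/

open MeasureTheory ProbabilityTheory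

/-- `F_k(s) := E[(max(0, s − Σ_{i=1}^k U_i))²]` for i.i.d. Uniform(0,1) variables `U_i`. -/
noncomputable def uniformShortfallSq (k : ℕ) (s : ℝ) : ℝ :=
  ∫ u : Fin k → ℝ, (max 0 (s - ∑ i, u i)) ^ 2
    ∂(Measure.pi fun _ : Fin k => volume.restrict (Set.Icc (0:ℝ) 1))

open Real Set

instance nullSingletonClass_expMeasure (c : ℝ) : NullSingletonClass (expMeasure c) := by
  unfold expMeasure gammaMeasure; infer_instance

section ExpMeasure

variable {c x y : ℝ}

lemma exp_neg_mul_le_exp_neg_mul_iff (hc : 0 < c) :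
    exp (-(c * x)) ≤ exp (-(c * y)) ↔ y ≤ x := by
  rw [exp_le_exp, neg_le_neg_iff, mul_le_mul_iff_right₀ hc]

lemma expMeasure_Icc (hc : 0 < c) (hx : 0 ≤ x) (hxy : x ≤ y) :
    expMeasure c (Icc x y) = ENNReal.ofReal (exp (-(c * x)) - exp (-(c * y))) := by
  have := isProbabilityMeasure_expMeasure hc
  rw [← measure_congr Ioc_ae_eq_Icc, ← measure_cdf (expMeasure c),
    StieltjesFunction.measure_Ioc, cdf_expMeasure_eq hc, cdf_expMeasure_eq hc,
    if_pos hx, if_pos (hx.trans hxy), sub_sub_sub_cancel_left]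

end ExpMeasure

/-- On `[0,1]` this inverts `u = (e^{-ca} - e^{-cx}) / (e^{-ca} - e^{-cb})`, the CDF of `Exp(c)`
conditioned on `[a,b]`. -/
noncomputable def expCondQuantile (c a b u : ℝ) : ℝ :=
  -log ((1 - u) * exp (-(c * a)) + u * exp (-(c * b))) / c

section ExpCondQuantile

variable {c a b u x : ℝ}

@[fun_prop]
lemma measurable_expCondQuantile (c a b : ℝ) : Measurable (expCondQuantile c a b) := by
  unfold expCondQuantile; fun_prop

lemma exp_neg_mul_expCondQuantile (hc : c ≠ 0) (hu : u ∈ Icc 0 1) :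
    exp (-(c * expCondQuantile c a b u)) = (1 - u) * exp (-(c * a)) + u * exp (-(c * b)) := by
  have : 0 < (1 - u) * exp (-(c * a)) + u * exp (-(c * b)) := by
    rcases hu with ⟨h0, h1⟩
    rcases h0.lt_or_eq with h0 | rfl
    · have := exp_pos (-(c * b)); positivity
    · simp [exp_pos]
  rw [expCondQuantile, mul_div_cancel₀ _ hc, neg_neg, exp_log this]

lemma expCondQuantile_le_iff (hc : 0 < c) (hu : u ∈ Icc 0 1) :
    expCondQuantile c a b u ≤ x ↔
      exp (-(c * x)) ≤ (1 - u) * exp (-(c * a)) + u * exp (-(c * b)) := by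
  rw [← exp_neg_mul_expCondQuantile hc.ne' hu, exp_neg_mul_le_exp_neg_mul_iff hc]

lemma le_expCondQuantile_iff (hc : 0 < c) (hu : u ∈ Icc 0 1) :
    x ≤ expCondQuantile c a b u ↔
      (1 - u) * exp (-(c * a)) + u * exp (-(c * b)) ≤ exp (-(c * x)) := by
  rw [← exp_neg_mul_expCondQuantile hc.ne' hu, exp_neg_mul_le_exp_neg_mul_iff hc]

lemma le_expCondQuantile (hc : 0 < c) (hab : a ≤ b) (hu : u ∈ Icc 0 1) :
    a ≤ expCondQuantile c a b u := by
  have := (exp_neg_mul_le_exp_neg_mul_iff hc).2 hab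
  rw [le_expCondQuantile_iff hc hu]
  nlinarith [hu.1]

lemma expCondQuantile_le (hc : 0 < c) (hu : u ∈ Icc 0 1) :
    expCondQuantile c a b u ≤ a + (b - a) * u := by
  rw [expCondQuantile_le_iff hc hu]
  have h := convexOn_exp.2 (mem_univ (-(c * a))) (mem_univ (-(c * b))) (sub_nonneg.2 hu.2) hu.1
    (by ring)
  simp only [smul_eq_mul] at h
  rwa [show -(c * (a + (b - a) * u)) = (1 - u) * -(c * a) + u * -(c * b) by ring]

lemma map_expCondQuantile (hc : 0 < c) (ha : 0 ≤ a) (hab : a < b) :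
    (volume.restrict (Icc (0 : ℝ) 1)).map (expCondQuantile c a b) = (expMeasure c)[|Icc a b] := by
  set A := exp (-(c * a))
  set B := exp (-(c * b))
  have hBA : 0 < A - B := sub_pos.2 (exp_lt_exp.2 (by nlinarith))
  set G : ℝ → ℝ := fun x => (A - exp (-(c * x))) / (A - B) with hG_def
  have hG : Monotone G := fun x y hxy =>
    div_le_div_of_nonneg_right (by linarith [(exp_neg_mul_le_exp_neg_mul_iff hc).2 hxy]) hBA.le
  have hGb : G b = 1 := div_self hBA.ne'
  have hpre (x : ℝ) : expCondQuantile c a b ⁻¹' Iic x ∩ Icc 0 1 = Icc 0 (min 1 (G x)) := by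
    ext u
    simp only [mem_inter_iff, mem_preimage, mem_Iic, mem_Icc, le_min_iff, hG_def]
    constructor
    · rintro ⟨hx, hu⟩
      rw [expCondQuantile_le_iff hc hu] at hx
      exact ⟨hu.1, hu.2, (le_div_iff₀ hBA).2 (by linarith)⟩
    · rintro ⟨h0, h1, hx⟩
      rw [expCondQuantile_le_iff hc ⟨h0, h1⟩]
      exact ⟨by linarith [(le_div_iff₀ hBA).1 hx], h0, h1⟩
  have := isProbabilityMeasure_expMeasure hc
  refine Measure.ext_of_Iic _ _ fun x => ?_
  rw [Measure.map_apply (measurable_expCondQuantile c a b) measurableSet_Iic,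
    Measure.restrict_apply (measurable_expCondQuantile c a b measurableSet_Iic), hpre,
    volume_Icc, sub_zero, cond_apply measurableSet_Icc, expMeasure_Icc hc ha hab.le]
  rw [← Ici_inter_Iic, inter_assoc, Iic_inter_Iic, Ici_inter_Iic]
  rcases lt_or_ge x a with hxa | hax
  · have hGx : G x < 0 := div_neg_of_neg_of_pos (sub_neg.2 (exp_lt_exp.2 (by nlinarith))) hBA
    rw [Icc_eq_empty (by grind), measure_empty, mul_zero,
      ENNReal.ofReal_eq_zero.2 ((min_le_right _ _).trans hGx.le)]
  · rw [expMeasure_Icc hc ha (le_min hab.le hax), ← ENNReal.div_eq_inv_mul,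
      ← ENNReal.ofReal_div_of_pos hBA, ← hGb, ← hG.map_min]

end ExpCondQuantile

section Shortfall

variable {α : Type*} [MeasurableSpace α] {μ : Measure α}

lemma integrable_shortfallSq [IsFiniteMeasure μ] {T : α → ℝ} (hT : AEMeasurable T μ) {m : ℝ}
    (hm : ∀ᵐ x ∂μ, m ≤ T x) (S : ℝ) : Integrable (fun x => max 0 (S - T x) ^ 2) μ := by
  refine Integrable.mono' (integrable_const (max 0 (S - m) ^ 2)) (by fun_prop) ?_
  filter_upwards [hm] with x hx
  rw [Real.norm_eq_abs, abs_sq]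
  gcongr

lemma integral_shortfallSq_anti [IsFiniteMeasure μ] {T T' : α → ℝ} (hT : AEMeasurable T μ)
    (hT' : AEMeasurable T' μ) {m : ℝ} (hm : ∀ᵐ x ∂μ, m ≤ T x) (hTT' : T ≤ᵐ[μ] T') (S : ℝ) :
    ∫ x, max 0 (S - T' x) ^ 2 ∂μ ≤ ∫ x, max 0 (S - T x) ^ 2 ∂μ := by
  have hm' : ∀ᵐ x ∂μ, m ≤ T' x := by
    filter_upwards [hm, hTT'] with x h h' using h.trans h'
  refine integral_mono_ae (integrable_shortfallSq hT' hm' S) (integrable_shortfallSq hT hm S) ?_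
  filter_upwards [hTT'] with x hx
  gcongr

lemma integral_shortfallSq_map {ι : Type*} [Fintype ι] {f : α → ι → ℝ} (hf : AEMeasurable f μ)
    (S : ℝ) : ∫ y, max 0 (S - ∑ i, y i) ^ 2 ∂μ.map f = ∫ x, max 0 (S - ∑ i, f x i) ^ 2 ∂μ :=
  integral_map hf (by fun_prop)

end Shortfall

lemma sq_mul_uniformShortfallSq {k : ℕ} {a b : ℝ} (hab : a < b) (v : Fin k → ℝ) :
    (b - a) ^ 2 * uniformShortfallSq k (∑ i, (v i - a) / (b - a))
      = ∫ u : Fin k → ℝ, max 0 (∑ i, v i - ∑ i, (a + (b - a) * u i)) ^ 2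
          ∂Measure.pi fun _ => volume.restrict (Icc (0 : ℝ) 1) := by
  rw [uniformShortfallSq, ← integral_const_mul]
  congr 1 with u
  have hba : 0 < b - a := sub_pos.2 hab
  rw [← mul_pow, mul_max_of_nonneg _ _ hba.le, mul_zero, mul_sub, Finset.mul_sum, Finset.mul_sum]
  simp only [mul_div_cancel₀ _ hba.ne', Finset.sum_sub_distrib, Finset.sum_add_distrib,
    sub_add_eq_sub_sub]

theorem conditioned_exponential_shortfall_bound_general
    {Ω : Type} [MeasurableSpace Ω] (μ : Measure Ω)
    (k : ℕ) (a b : ℝ) (hab : 0 < a) (hab' : a < b)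
    (lam : Fin k → ℝ) (hlam : ∀ i, 0 < lam i)
    (Vf : Fin k → Ω → ℝ) (hmeas : ∀ i, Measurable (Vf i))
    (hindep : iIndepFun Vf μ)
    (hlaw : ∀ i, Measure.map (Vf i) μ = (expMeasure (lam i))[|Set.Icc a b])
    (v : Fin k → ℝ) :
    (b - a) ^ 2 * uniformShortfallSq k (∑ i, (v i - a) / (b - a))
      ≤ ∫ ω, (max 0 (∑ i, v i - ∑ i, Vf i ω)) ^ 2 ∂μ := by
  set P := Measure.pi fun _ : Fin k => volume.restrict (Icc (0 : ℝ) 1)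
  set ψ : (Fin k → ℝ) → Fin k → ℝ := fun u i => expCondQuantile (lam i) a b (u i)
  have hψ : Measurable ψ := by fun_prop
  have hjoint : μ.map (fun ω i => Vf i ω) = P.map ψ := by
    rw [hindep.map_fun_eq_pi_map fun i => (hmeas i).aemeasurable,
      Measure.pi_map_pi fun i => (measurable_expCondQuantile _ a b).aemeasurable]
    simp only [hlaw, map_expCondQuantile (hlam _) hab.le hab']
  have hunit : ∀ᵐ u ∂P, ∀ i, u i ∈ Icc (0 : ℝ) 1 :=
    ae_all_iff.2 fun _ => Measure.tendsto_eval_ae_ae.eventually (ae_restrict_mem measurableSet_Icc)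
  calc (b - a) ^ 2 * uniformShortfallSq k (∑ i, (v i - a) / (b - a))
      = ∫ u, max 0 (∑ i, v i - ∑ i, (a + (b - a) * u i)) ^ 2 ∂P :=
        sq_mul_uniformShortfallSq hab' v
    _ ≤ ∫ u, max 0 (∑ i, v i - ∑ i, ψ u i) ^ 2 ∂P := by
        refine integral_shortfallSq_anti (Measurable.aemeasurable (by fun_prop))
          (Measurable.aemeasurable (by fun_prop)) (m := ∑ _i : Fin k, a) ?_ ?_ _
        · filter_upwards [hunit] with u hu using
            Finset.sum_le_sum fun i _ => le_expCondQuantile (hlam i) hab'.le (hu i)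
        · filter_upwards [hunit] with u hu using
            Finset.sum_le_sum fun i _ => expCondQuantile_le (hlam i) (hu i)
    _ = ∫ ω, max 0 (∑ i, v i - ∑ i, Vf i ω) ^ 2 ∂μ := by
        rw [← integral_shortfallSq_map hψ.aemeasurable, ← hjoint,
          integral_shortfallSq_map (measurable_pi_lambda _ hmeas).aemeasurable]

/-- Lemma 10: if `V₁,…,V_k` are independent, `V_i` an Exponential(rate `λ_i`) conditioned
to lie in `[a,b]`, then for arbitrary `v_i ∈ [a,b]`,
`E[(max(0, Σ v_i − Σ V_i))²] ≥ (b−a)² F_k(Σ (v_i − a)/(b−a))`. -/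
theorem conditioned_exponential_shortfall_bound
    {Ω : Type} [MeasurableSpace Ω] (μ : Measure Ω) [IsProbabilityMeasure μ]
    (k : ℕ) (hk : 1 ≤ k) (a b : ℝ) (hab : 0 < a) (hab' : a < b)
    (lam : Fin k → ℝ) (hlam : ∀ i, 0 < lam i)
    (Vf : Fin k → Ω → ℝ) (hmeas : ∀ i, Measurable (Vf i))
    (hindep : iIndepFun Vf μ)
    (hlaw : ∀ i, Measure.map (Vf i) μ = (expMeasure (lam i))[|Set.Icc a b])
    (v : Fin k → ℝ) (hv : ∀ i, v i ∈ Set.Icc a b) :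
    (b - a) ^ 2 * uniformShortfallSq k (∑ i, (v i - a) / (b - a))
      ≤ ∫ ω, (max 0 (∑ i, v i - ∑ i, Vf i ω)) ^ 2 ∂μ :=
  conditioned_exponential_shortfall_bound_general μ k a b hab hab' lam hlam Vf hmeas hindep hlaw v
end
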